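/- arXiv:2012.04565 — 3 statements merged into one kernel-verified Lean document; each statement's English description precedes it below -/
import Mathlib

section
/- In any feasible MLCP solution, for each rolling stock unit i and maintenance type k with maximum interval o_k, and for any time t with 0 ≤ t ≤ T − o_k, there exists an MO j of unit i with x_{ijk} = 1 whose start time satisfies t < s_{ij} ≤ t' for some scheduled previous activity ending at time ≥ t − o_k; consequently, the gap between consecutive scheduled activities of type k (measured from end of one MO to start of the next) never exceeds o_k within the horizon. -/
/-- Coverage property of feasible MLCP schedules for one unit and one maintenance type:
given the initial constraint (1) (with `b = 0`) and the chaining constraint (2),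
every time point `t ∈ [0, T - o]` is within `o` of some scheduled activity:
there is a scheduled MO `j` with `t < e j + o` and `s j ≤ t + o`. -/
theorem mlcp_schedule_coverage {ι : Type} [Fintype ι]
    (s e : ι → ℝ) (o T : ℝ) (ho : 0 < o)
    (hse : ∀ j, s j ≤ e j)
    (S : Set ι)
    (h1 : ∃ j ∈ S, s j ≤ o)
    (h2 : ∀ j ∈ S, e j + o ≤ T → ∃ j' ∈ S, e j < s j' ∧ s j' ≤ e j + o) :
    ∀ t : ℝ, 0 ≤ t → t ≤ T - o → ∃ j ∈ S, t < e j + o ∧ s j ≤ t + o := by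
  intro t ht htT
  classical
  set A : Finset ι := Finset.univ.filter (fun j => j ∈ S ∧ s j ≤ t + o) with hA
  obtain ⟨j0, hj0S, hj0⟩ := h1
  have hj0A : j0 ∈ A := by
    simp only [hA, Finset.mem_filter, Finset.mem_univ, true_and]
    exact ⟨hj0S, hj0.trans (by linarith)⟩
  obtain ⟨j, hjA, hjmax⟩ := A.exists_max_image e ⟨j0, hj0A⟩
  simp only [hA, Finset.mem_filter, Finset.mem_univ, true_and] at hjA
  obtain ⟨hjS, hjs⟩ := hjA
  refine ⟨j, hjS, ?_, hjs⟩
  by_contra h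
  push_neg at h
  have hT : e j + o ≤ T := by linarith
  obtain ⟨j', hj'S, hlt, hle⟩ := h2 j hjS hT
  have hj'A : j' ∈ A := by
    simp only [hA, Finset.mem_filter, Finset.mem_univ, true_and]
    exact ⟨hj'S, by linarith⟩
  have := hjmax j' hj'A
  have := hse j'
  linarith
end

section
/- Covering lemma for interval constraints: let 0 = t_0 and let S = {(s_1, e_1), …, (s_m, e_m)} with s_1 ≤ o and, for each a < m with e_a + o ≤ T, s_{a+1} ≤ e_a + o and s_{a+1} > e_a (chain condition). If additionally e_m + o > T, then every point t ∈ [0, T] satisfies: either t ≤ o, or there exists a with e_a ≤ t < e_a + o and either a = m or s_{a+1} ≤ e_a + o; in particular, max consecutive 'dry' time without an activity ending is at most o plus the maximal MO duration. -/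
/-- Covering lemma for the MLCP interval constraints: an ordered chain of scheduled
MOs `(s_a, e_a)`, starting by time `o` and chained with gaps at most `o` as long as
`e_a + o ≤ T`, whose last element satisfies `e_last + o > T`, covers the horizon:
every `t ∈ [0, T]` is within `o` of some scheduled activity, i.e. there is an index
`a` with `s_a ≤ t + o` and `t < e_a + o`. -/
theorem mlcp_chain_covering (m : ℕ) (hm : 0 < m)
    (s e : Fin m → ℝ) (o T : ℝ) (ho : 0 < o) (hT : o ≤ T)
    (hse : ∀ a, s a < e a)
    (hfirst : s ⟨0, hm⟩ ≤ o)
    (hchain : ∀ (a : Fin m) (h : a.val + 1 < m), e a + o ≤ T →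
        e a < s ⟨a.val + 1, h⟩ ∧ s ⟨a.val + 1, h⟩ ≤ e a + o)
    (hlast : T < e ⟨m - 1, Nat.sub_lt hm one_pos⟩ + o) :
    ∀ t : ℝ, 0 ≤ t → t ≤ T → ∃ a : Fin m, s a ≤ t + o ∧ t < e a + o := by
  intro t ht0 htT
  classical
  have hex : ∃ n : ℕ, ∃ h : n < m, t < e ⟨n, h⟩ + o :=
    ⟨m - 1, Nat.sub_lt hm one_pos, lt_of_le_of_lt htT hlast⟩
  obtain ⟨hn, hnt⟩ := Nat.find_spec hex
  refine ⟨⟨Nat.find hex, hn⟩, ?_, hnt⟩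
  rcases Nat.eq_zero_or_pos (Nat.find hex) with h0 | hpos
  · have heq : (⟨Nat.find hex, hn⟩ : Fin m) = ⟨0, hm⟩ := by
      exact Fin.ext h0
    rw [heq]
    linarith
  · obtain ⟨b, hb'⟩ := Nat.exists_eq_succ_of_ne_zero hpos.ne'
    have hn' : b + 1 < m := by omega
    have hb : b < m := Nat.lt_of_succ_lt hn'
    have hmin := Nat.find_min hex (show b < Nat.find hex by omega)
    push_neg at hmin
    have hbe : e ⟨b, hb⟩ + o ≤ t := hmin hb
    have hc := (hchain ⟨b, hb⟩ hn' (le_trans hbe htT)).2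
    have heq : (⟨Nat.find hex, hn⟩ : Fin m) = ⟨b + 1, hn'⟩ := Fin.ext hb'
    rw [heq]
    linarith
end

section
/- Lower bound on total activities: in any feasible MLCP solution over horizon T with maintenance types K, the total number of scheduled activities satisfies ∑_{i,j,k} x_{ijk} ≥ |I| · ∑_{k ∈ K} max(1, ⌈(T − o_k)/(M + o_k)⌉) whenever T ≥ o_k for all k, where M bounds all MO durations. -/
open Finset

/-- Feasibility of an MLCP solution `(x, y^D, y^N)`: constraints (1)–(6) of the MILP.
`unit j` is the rolling stock unit of MO `j`, `s`/`e` its start/end times, `loc` its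
location, `d` its daytime indicator; `o k`/`v k` are the interval and duration of
maintenance type `k`; `T` the horizon; `b u k` the initial elapsed time; `Lmax` the
bound on the number of daytime-open locations. -/
def MLCPFeasible {ι U K L : Type} [Fintype K] [Fintype L]
    (unit : ι → U) (s e : ι → ℝ) (loc : ι → L) (d : ι → Bool)
    (o v : K → ℝ) (T : ℝ) (b : U → K → ℝ) (Lmax : ℕ)
    (x : ι → K → Bool) (yD yN : L → Bool) : Prop :=
  -- (1): for each unit and type, an activity is scheduled within the first interval
  (∀ u k, ∃ j, unit j = u ∧ s j ≤ o k + b u k ∧ x j k = true) ∧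
  -- (2): each scheduled activity due for repetition is followed within `o k`
  (∀ j k, x j k = true → e j + o k ≤ T →
      ∃ p, unit p = unit j ∧ e j < s p ∧ s p ≤ e j + o k ∧ x p k = true) ∧
  -- (3): maintenance only at locations that are open in the relevant window
  (∀ j k, x j k = true → (if d j then yD (loc j) else yN (loc j)) = true) ∧
  -- (4): MO capacity
  (∀ j, (∑ k, if x j k = true then v k else 0) ≤ e j - s j) ∧
  -- (5): bound on the number of daytime-open locations
  (Finset.univ.filter (fun l => yD l = true)).card ≤ Lmax

/-- The MLCP objective: number of nighttime activities plus `ε` times the total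
number of activities. -/
def mlcpObj {ι K : Type} [Fintype ι] [Fintype K]
    (d : ι → Bool) (ε : ℝ) (x : ι → K → Bool) : ℝ :=
  (∑ j, ∑ k, if x j k = true then (if d j then (0:ℝ) else 1) else 0) +
    ε * ∑ j, ∑ k, if x j k = true then (1:ℝ) else 0

/-- Lower bound on the total number of scheduled activities in any feasible MLCP
solution: with horizon `T ≥ o k` for all `k` and all MO durations bounded by `M`,
the total number of activities is at least
`|I| · ∑_k max 1 ⌈(T - o k)/(M + o k)⌉`. -/
theorem mlcp_total_activity_lower_bound
    {ι U K L : Type} [Fintype ι] [Fintype U] [Fintype K] [Fintype L]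
    (unit : ι → U) (s e : ι → ℝ) (loc : ι → L) (d : ι → Bool)
    (o v : K → ℝ) (T : ℝ) (b : U → K → ℝ) (Lmax : ℕ)
    (M : ℝ) (hM : 0 ≤ M)
    (ho : ∀ k, 0 < o k) (hT : ∀ k, o k ≤ T)
    (hb : ∀ u k, b u k = 0)
    (hdur : ∀ j, s j ≤ e j ∧ e j - s j ≤ M)
    (x : ι → K → Bool) (yD yN : L → Bool)
    (hfeas : MLCPFeasible unit s e loc d o v T b Lmax x yD yN) :
    Fintype.card U * ∑ k, max 1 ⌈(T - o k) / (M + o k)⌉₊ ≤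
      (Finset.univ.filter (fun p : ι × K => x p.1 p.2 = true)).card := by

  classical
  obtain ⟨h1, h2, h3, h4, h5⟩ := hfeas
  -- Per-(unit, type) lower bound
  have key : ∀ (u : U) (k : K),
      (max 1 ⌈(T - o k) / (M + o k)⌉₊ : ℕ) ≤
        (Finset.univ.filter (fun j : ι => unit j = u ∧ x j k = true)).card := by
    intro u k
    have hpos : (0:ℝ) < M + o k := by linarith [ho k]
    set r : ℝ := (T - o k) / (M + o k) with hrdef
    set N : ℕ := max 1 ⌈r⌉₊ with hN
    have hN1 : 1 ≤ N := le_max_left _ _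
    set n : ℕ := N - 1 with hn
    have hNn : N = n + 1 := by omega
    have hnr : n = 0 ∨ (n : ℝ) < r := by
      by_cases hc : ⌈r⌉₊ ≤ 1
      · left; omega
      · right
        have : n < ⌈r⌉₊ := by omega
        exact Nat.lt_ceil.mp this
    -- base activity from constraint (1)
    obtain ⟨j0, hj0u, hj0s, hj0x⟩ := h1 u k
    rw [hb u k] at hj0s
    -- step from constraint (2)
    have step : ∀ j : ι, unit j = u → x j k = true → e j + o k ≤ T →
        ∃ p, unit p = u ∧ e j < s p ∧ s p ≤ e j + o k ∧ x p k = true := by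
      intro j hju hjx hjT
      obtain ⟨p, hp1, hp2, hp3, hp4⟩ := h2 j k hjx hjT
      exact ⟨p, hju ▸ hp1, hp2, hp3, hp4⟩
    -- the chain
    let g : ℕ → ι := fun t => Nat.rec j0 (fun _ jt =>
      if h : unit jt = u ∧ x jt k = true ∧ e jt + o k ≤ T then
        Classical.choose (step jt h.1 h.2.1 h.2.2) else jt) t
    have hg0 : g 0 = j0 := rfl
    have hgsucc : ∀ t, g (t+1) =
        (if h : unit (g t) = u ∧ x (g t) k = true ∧ e (g t) + o k ≤ T then
          Classical.choose (step (g t) h.1 h.2.1 h.2.2) else g t) := fun t => rfl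
    -- invariant
    have hInv : ∀ t, unit (g t) = u ∧ x (g t) k = true ∧
        s (g t) ≤ o k + t * (M + o k) := by
      intro t
      induction t with
      | zero => simpa [hg0] using ⟨hj0u, hj0x, by simpa using hj0s⟩
      | succ m ih =>
        obtain ⟨ihu, ihx, ihs⟩ := ih
        rw [hgsucc m]
        by_cases h : unit (g m) = u ∧ x (g m) k = true ∧ e (g m) + o k ≤ T
        · rw [dif_pos h]
          obtain ⟨hp1, hp2, hp3, hp4⟩ := Classical.choose_spec (step (g m) h.1 h.2.1 h.2.2)
          refine ⟨hp1, hp4, ?_⟩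
          have hbnd := (hdur (g m)).2
          have : (↑(m+1) : ℝ) * (M + o k) = ↑m * (M + o k) + (M + o k) := by
            push_cast; ring
          rw [this]
          linarith
        · rw [dif_neg h]
          refine ⟨ihu, ihx, ?_⟩
          have : (↑(m+1) : ℝ) * (M + o k) = ↑m * (M + o k) + (M + o k) := by
            push_cast; ring
          rw [this]
          linarith
    -- for t < n the continuation condition holds
    have hcond : ∀ t, t < n → e (g t) + o k ≤ T := by
      intro t ht
      obtain ⟨-, -, ihs⟩ := hInv t
      have hbnd := (hdur (g t)).2
      have hrn : (n : ℝ) < r := by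
        rcases hnr with h0 | h0
        · omega
        · exact h0
      have htn : ((t:ℝ) + 1) ≤ (n : ℝ) := by exact_mod_cast ht
      have h1' : ((t:ℝ) + 1) * (M + o k) ≤ (n:ℝ) * (M + o k) :=
        mul_le_mul_of_nonneg_right htn (le_of_lt hpos)
      have h2' : (n:ℝ) * (M + o k) < r * (M + o k) :=
        (mul_lt_mul_of_pos_right hrn hpos)
      have h3' : r * (M + o k) = T - o k := by
        rw [hrdef]; field_simp
      nlinarith
    -- strict increase of start times along the chain
    have hstep : ∀ t, t < n → s (g t) < s (g (t+1)) := by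
      intro t ht
      obtain ⟨ihu, ihx, -⟩ := hInv t
      have h : unit (g t) = u ∧ x (g t) k = true ∧ e (g t) + o k ≤ T :=
        ⟨ihu, ihx, hcond t ht⟩
      rw [hgsucc t, dif_pos h]
      obtain ⟨-, hp2, -, -⟩ := Classical.choose_spec (step (g t) h.1 h.2.1 h.2.2)
      have := (hdur (g t)).1
      linarith
    have hmono : ∀ a b, a < b → b ≤ n → s (g a) < s (g b) := by
      intro a b hab hbn
      induction b with
      | zero => omega
      | succ m ih =>
        rcases Nat.lt_succ_iff_lt_or_eq.mp hab with h | h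
        · exact lt_trans (ih h (by omega)) (hstep m (by omega))
        · subst h; exact hstep a (by omega)
    -- the image of the chain gives N distinct activities
    have hsub : (Finset.range (n+1)).image g ⊆
        Finset.univ.filter (fun j : ι => unit j = u ∧ x j k = true) := by
      intro j hj
      simp only [Finset.mem_image, Finset.mem_range] at hj
      obtain ⟨t, -, rfl⟩ := hj
      simp only [Finset.mem_filter, Finset.mem_univ, true_and]
      exact ⟨(hInv t).1, (hInv t).2.1⟩
    have hcard : ((Finset.range (n+1)).image g).card = n + 1 := by
      rw [Finset.card_image_of_injOn, Finset.card_range]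
      intro a ha b hb hab
      simp only [Finset.coe_range, Set.mem_Iio] at ha hb
      by_contra hne
      rcases lt_or_gt_of_ne hne with h | h
      · exact absurd (hmono a b h (by omega)) (by rw [hab]; exact lt_irrefl _)
      · exact absurd (hmono b a h (by omega)) (by rw [hab]; exact lt_irrefl _)
    calc (max 1 ⌈(T - o k) / (M + o k)⌉₊ : ℕ) = n + 1 := hNn
      _ = ((Finset.range (n+1)).image g).card := hcard.symm
      _ ≤ _ := Finset.card_le_card hsub
  -- Counting: split the product filter by type, then by unit
  have hprod : (Finset.univ.filter (fun p : ι × K => x p.1 p.2 = true)).card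
      = ∑ k, (Finset.univ.filter (fun j : ι => x j k = true)).card := by
    rw [Finset.card_filter, Fintype.sum_prod_type, Finset.sum_comm]
    refine Finset.sum_congr rfl fun k _ => ?_
    rw [Finset.card_filter]
  have hfiber : ∀ k : K, (Finset.univ.filter (fun j : ι => x j k = true)).card
      = ∑ u : U, (Finset.univ.filter (fun j : ι => unit j = u ∧ x j k = true)).card := by
    intro k
    rw [Finset.card_eq_sum_card_fiberwise (f := unit)
      (t := (Finset.univ : Finset U)) (fun j _ => Finset.mem_univ _)]
    refine Finset.sum_congr rfl fun u _ => ?_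
    congr 1
    ext j
    simp [Finset.mem_filter, and_comm]
  calc Fintype.card U * ∑ k, max 1 ⌈(T - o k) / (M + o k)⌉₊
      = ∑ k, ∑ _u : U, max 1 ⌈(T - o k) / (M + o k)⌉₊ := by
        rw [Finset.mul_sum]
        refine Finset.sum_congr rfl fun k _ => ?_
        rw [Finset.sum_const, Finset.card_univ, smul_eq_mul]
    _ ≤ ∑ k, ∑ u : U,
        (Finset.univ.filter (fun j : ι => unit j = u ∧ x j k = true)).card := by
        refine Finset.sum_le_sum fun k _ => Finset.sum_le_sum fun u _ => key u k
    _ = ∑ k, (Finset.univ.filter (fun j : ι => x j k = true)).card := by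
        refine Finset.sum_congr rfl fun k _ => (hfiber k).symm
    _ = _ := hprod.symm
end
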